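/- Let α ∈ (0, 1/3) and set the threshold θ = 2√2 − 5√2·α. Let S, S̄ be real-valued with S̄ a random variable on a probability space (Ω, P) and S a constant. Then: (i) if S ≤ 2√2 − 6√2·α, then P[S̄ ≥ θ] ≤ P[|S̄ − S| ≥ √2·α]; and (ii) if S ≥ 2√2 − 4√2·α, then P[S̄ < θ] ≤ P[|S̄ − S| ≥ √2·α]. Consequently, for a two-qubit density matrix ρ with CHSH value S = S(ρ) and fidelity F = F(ρ), the error probability of the verification test 'accept H₀ iff S̄ ≥ θ' satisfies P[S̄ ≥ θ and F ≤ 1−3α] + P[S̄ < θ and F ≥ 1−α] ≤ 2·P[|S̄ − S| ≥ √2·α]. -/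

import Mathlib

open Matrix Kronecker Complex ComplexOrder

noncomputable section

/-- Pauli X matrix. -/
def sigX : Matrix (Fin 2) (Fin 2) ℂ := !![0, 1; 1, 0]

/-- Pauli Z matrix. -/
def sigZ : Matrix (Fin 2) (Fin 2) ℂ := !![1, 0; 0, -1]

/-- Bob's observable `B₀ = (σx + σz)/√2`. -/
def Bob0 : Matrix (Fin 2) (Fin 2) ℂ := ((Real.sqrt 2 : ℂ))⁻¹ • (sigX + sigZ)

/-- Bob's observable `B₁ = (σx − σz)/√2`. -/
def Bob1 : Matrix (Fin 2) (Fin 2) ℂ := ((Real.sqrt 2 : ℂ))⁻¹ • (sigX - sigZ)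

/-- The CHSH operator `Ŝ = A₀⊗B₀ + A₁⊗B₀ + A₀⊗B₁ − A₁⊗B₁` with `A₀ = σx`, `A₁ = σz`. -/
def Shat : Matrix (Fin 2 × Fin 2) (Fin 2 × Fin 2) ℂ :=
  sigX ⊗ₖ Bob0 + sigZ ⊗ₖ Bob0 + sigX ⊗ₖ Bob1 - sigZ ⊗ₖ Bob1

/-- Bell state `|Φ⁺⟩ = (|00⟩ + |11⟩)/√2`. -/
def phiPlus : Fin 2 × Fin 2 → ℂ :=
  fun p => if p = (0, 0) ∨ p = (1, 1) then ((Real.sqrt 2 : ℂ))⁻¹ else 0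

/-- Bell state `|Ψ⁻⟩ = (|01⟩ − |10⟩)/√2`. -/
def psiMinus : Fin 2 × Fin 2 → ℂ :=
  fun p => if p = (0, 1) then ((Real.sqrt 2 : ℂ))⁻¹
    else if p = (1, 0) then -((Real.sqrt 2 : ℂ))⁻¹ else 0

/-- CHSH measure `S(ρ) = Tr(ρ Ŝ)` (a real number for Hermitian ρ). -/
def Smeas (ρ : Matrix (Fin 2 × Fin 2) (Fin 2 × Fin 2) ℂ) : ℝ :=
  ((ρ * Shat).trace).re

/-- Entanglement fidelity `F(ρ) = ⟨Φ⁺|ρ|Φ⁺⟩`. -/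
def Fent (ρ : Matrix (Fin 2 × Fin 2) (Fin 2 × Fin 2) ℂ) : ℝ :=
  (star phiPlus ⬝ᵥ ρ *ᵥ phiPlus).re

end

open MeasureTheory ProbabilityTheory Finset

noncomputable section

/-- Empirical mean `m(i,j) = (1/N) ∑ₖ X (i,j) k`. -/
def empMean {Ω : Type*} {N : ℕ} (X : Fin 2 × Fin 2 → Fin N → Ω → ℝ)
    (ij : Fin 2 × Fin 2) (ω : Ω) : ℝ :=
  (1 / N) * ∑ k, X ij k ω

/-- Empirical CHSH estimate `S̄ = m(0,0) + m(1,0) + m(0,1) − m(1,1)`. -/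
def SbarEmp {Ω : Type*} {N : ℕ} (X : Fin 2 × Fin 2 → Fin N → Ω → ℝ) (ω : Ω) : ℝ :=
  empMean X (0, 0) ω + empMean X (1, 0) ω + empMean X (0, 1) ω - empMean X (1, 1) ω

/-- True CHSH value `S = μ(0,0) + μ(1,0) + μ(0,1) − μ(1,1)`. -/
def Strue (μ : Fin 2 × Fin 2 → ℝ) : ℝ := μ (0, 0) + μ (1, 0) + μ (0, 1) - μ (1, 1)

end

/-! In the computational basis put `a = Re(ρ₀₀,₀₀ + ρ₁₁,₁₁)`, `b = Re(ρ₀₀,₁₁ + ρ₁₁,₀₀)`,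
`c = Re(ρ₀₁,₀₁ + ρ₁₀,₁₀)` and `d = Re(ρ₀₁,₁₀ + ρ₁₀,₀₁)`. Then `S(ρ) = √2 (a + b − c + d)`,
`F(ρ) = (a + b)/2` and `a + c = 1`, while positivity of `ρ` on the vectors `|p⟩ ± |q⟩` gives
`|b| ≤ a` and `|d| ≤ c`; hence `S ≤ 2√2 F` and `4√2 F − 2√2 ≤ S`. Each hypothesis on `F` thus puts
`S` at distance at least `√2 α` from the threshold `θ`, on the side where the test is right, so the
test can only err if `|S̄ − S| ≥ √2 α`. -/

section Deviation

variable {Ω : Type*} [MeasurableSpace Ω] (μ : Measure Ω) (X : Ω → ℝ) {S θ δ : ℝ}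

lemma measure_ge_le_measure_abs_sub_ge (h : S + δ ≤ θ) :
    μ {ω | X ω ≥ θ} ≤ μ {ω | |X ω - S| ≥ δ} :=
  measure_mono fun ω (hω : θ ≤ X ω) ↦ show δ ≤ |X ω - S| from
    le_abs.mpr (Or.inl (by linarith))

lemma measure_lt_le_measure_abs_sub_ge (h : θ + δ ≤ S) :
    μ {ω | X ω < θ} ≤ μ {ω | |X ω - S| ≥ δ} :=
  measure_mono fun ω (hω : X ω < θ) ↦ show δ ≤ |X ω - S| from
    le_abs.mpr (Or.inr (by linarith))

variable {μ} in
lemma measure_setOf_and_const_le {s : Ω → Prop} {q : Prop} {b : ENNReal}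
    (h : q → μ {ω | s ω} ≤ b) : μ {ω | s ω ∧ q} ≤ b := by
  by_cases hq : q
  · simpa only [hq, and_true] using h hq
  · simp only [hq, and_false, Set.ofPred_false, measure_empty, zero_le]

end Deviation

lemma Matrix.PosSemidef.abs_re_apply_add_apply_le {n : Type*} [Fintype n] [DecidableEq n]
    {ρ : Matrix n n ℂ} (hρ : ρ.PosSemidef) (p q : n) :
    |(ρ p q + ρ q p).re| ≤ (ρ p p + ρ q q).re := by
  have expect (s : ℂ) : 0 ≤ (ρ p p + star s * ρ q p + ρ p q * s + star s * ρ q q * s).re := by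
    have h := (Complex.le_def.mp
      (hρ.dotProduct_mulVec_nonneg (Pi.single p 1 + Pi.single q s))).1
    simp only [star_add, Pi.star_single, star_one, mulVec_add, mulVec_single, add_dotProduct,
      single_dotProduct, Pi.add_apply, Pi.smul_apply, op_smul_eq_mul, col_apply,
      Complex.zero_re] at h
    convert h using 2
    ring
  have plus := expect 1
  have minus := expect (-1)
  simp only [star_one, star_neg, one_mul, mul_one, neg_one_mul, mul_neg, neg_neg,
    Complex.add_re, Complex.neg_re] at plus minus
  simp only [Complex.add_re]
  rw [abs_le]
  constructor <;> linarith

lemma ofReal_sqrt_two_mul_ofReal_sqrt_two : (Real.sqrt 2 : ℂ) * (Real.sqrt 2 : ℂ) = 2 := by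
  rw [← Complex.ofReal_mul, Real.mul_self_sqrt zero_le_two, Complex.ofReal_ofNat]

section TwoQubit

variable (ρ : Matrix (Fin 2 × Fin 2) (Fin 2 × Fin 2) ℂ)

lemma Fent_eq :
    Fent ρ = ((ρ (0,0) (0,0) + ρ (1,1) (1,1)).re + (ρ (0,0) (1,1) + ρ (1,1) (0,0)).re) / 2 := by
  have expect : star phiPlus ⬝ᵥ ρ *ᵥ phiPlus =
      (ρ (0,0) (0,0) + ρ (1,1) (1,1) + (ρ (0,0) (1,1) + ρ (1,1) (0,0))) / 2 := by
    simp only [dotProduct, mulVec, Fintype.sum_prod_type, Fin.sum_univ_two, phiPlus,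
      Pi.star_apply, Complex.star_def]
    norm_num [Prod.ext_iff]
    field_simp
    linear_combination (-(ρ (0,0) (0,0) + ρ (1,1) (1,1) + (ρ (0,0) (1,1) + ρ (1,1) (0,0)))) *
      ofReal_sqrt_two_mul_ofReal_sqrt_two
  rw [Fent, expect, Complex.div_ofNat_re, Complex.add_re]

lemma Smeas_eq :
    Smeas ρ = Real.sqrt 2 * ((ρ (0,0) (0,0) + ρ (1,1) (1,1)).re + (ρ (0,0) (1,1) + ρ (1,1) (0,0)).re
      - (ρ (0,1) (0,1) + ρ (1,0) (1,0)).re + (ρ (0,1) (1,0) + ρ (1,0) (0,1)).re) := by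
  have trace : (ρ * Shat).trace = (Real.sqrt 2 : ℂ) *
      (ρ (0,0) (0,0) + ρ (1,1) (1,1) + (ρ (0,0) (1,1) + ρ (1,1) (0,0))
        - (ρ (0,1) (0,1) + ρ (1,0) (1,0)) + (ρ (0,1) (1,0) + ρ (1,0) (0,1))) := by
    simp only [Matrix.trace, Matrix.diag, mul_apply, Fintype.sum_prod_type, Fin.sum_univ_two,
      Shat, Bob0, Bob1, sigX, sigZ, Matrix.add_apply, Matrix.sub_apply, Matrix.smul_apply,
      kroneckerMap_apply, of_apply, cons_val', cons_val_zero, cons_val_one,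
      empty_val', cons_val_fin_one, smul_eq_mul]
    field_simp
    linear_combination (-(ρ (0,0) (0,0) + ρ (1,1) (1,1) + (ρ (0,0) (1,1) + ρ (1,1) (0,0))
        - (ρ (0,1) (0,1) + ρ (1,0) (1,0)) + (ρ (0,1) (1,0) + ρ (1,0) (0,1)))) *
      ofReal_sqrt_two_mul_ofReal_sqrt_two
  rw [Smeas, trace, Complex.re_ofReal_mul, Complex.add_re, Complex.sub_re, Complex.add_re]

lemma trace_re_eq :
    ρ.trace.re = (ρ (0,0) (0,0) + ρ (1,1) (1,1)).re + (ρ (0,1) (0,1) + ρ (1,0) (1,0)).re := by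
  simp only [Matrix.trace, Matrix.diag, Fintype.sum_prod_type, Fin.sum_univ_two, Complex.add_re]
  ring

variable {ρ}

lemma Smeas_le_two_sqrt_two_mul_Fent (hρ : ρ.PosSemidef) :
    Smeas ρ ≤ 2 * Real.sqrt 2 * Fent ρ := by
  have hd := (abs_le.mp (hρ.abs_re_apply_add_apply_le (0,1) (1,0))).2
  rw [Smeas_eq, Fent_eq]
  nlinarith [Real.sqrt_nonneg 2]

lemma four_sqrt_two_mul_Fent_sub_le_Smeas (hρ : ρ.PosSemidef) (htr : ρ.trace = 1) :
    4 * Real.sqrt 2 * Fent ρ - 2 * Real.sqrt 2 ≤ Smeas ρ := by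
  have hb := (abs_le.mp (hρ.abs_re_apply_add_apply_le (0,0) (1,1))).2
  have hd := (abs_le.mp (hρ.abs_re_apply_add_apply_le (0,1) (1,0))).1
  have hsum := trace_re_eq ρ
  rw [htr, Complex.one_re] at hsum
  rw [Smeas_eq, Fent_eq]
  nlinarith [Real.sqrt_nonneg 2]

end TwoQubit

theorem verification_error_decomposition_general {Ω : Type*} [MeasurableSpace Ω]
    (P : MeasureTheory.Measure Ω)
    (Sb : Ω → ℝ)
    (α : ℝ) :
    (∀ S : ℝ,
      (S ≤ 2 * Real.sqrt 2 - 6 * Real.sqrt 2 * α →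
        P {ω | Sb ω ≥ 2 * Real.sqrt 2 - 5 * Real.sqrt 2 * α} ≤
          P {ω | |Sb ω - S| ≥ Real.sqrt 2 * α}) ∧
      (S ≥ 2 * Real.sqrt 2 - 4 * Real.sqrt 2 * α →
        P {ω | Sb ω < 2 * Real.sqrt 2 - 5 * Real.sqrt 2 * α} ≤
          P {ω | |Sb ω - S| ≥ Real.sqrt 2 * α})) ∧
    (∀ ρ : Matrix (Fin 2 × Fin 2) (Fin 2 × Fin 2) ℂ, ρ.PosSemidef → ρ.trace = 1 →
      P {ω | Sb ω ≥ 2 * Real.sqrt 2 - 5 * Real.sqrt 2 * α ∧ Fent ρ ≤ 1 - 3 * α} +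
        P {ω | Sb ω < 2 * Real.sqrt 2 - 5 * Real.sqrt 2 * α ∧ Fent ρ ≥ 1 - α} ≤
          2 * P {ω | |Sb ω - Smeas ρ| ≥ Real.sqrt 2 * α}) := by
  have sqrt_two_nonneg := Real.sqrt_nonneg 2
  refine ⟨fun S ↦ ⟨fun hS ↦ measure_ge_le_measure_abs_sub_ge P Sb (by linarith),
    fun hS ↦ measure_lt_le_measure_abs_sub_ge P Sb (by linarith)⟩, fun ρ hρ htr ↦ ?_⟩
  refine (add_le_add ?_ ?_).trans_eq (two_mul _).symm
  · refine measure_setOf_and_const_le fun hF ↦ measure_ge_le_measure_abs_sub_ge P Sb ?_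
    nlinarith [Smeas_le_two_sqrt_two_mul_Fent hρ]
  · refine measure_setOf_and_const_le fun hF ↦ measure_lt_le_measure_abs_sub_ge P Sb ?_
    nlinarith [four_sqrt_two_mul_Fent_sub_le_Smeas hρ htr]

/-- Error decomposition for the CHSH-based verification test with threshold
`θ = 2√2 − 5√2·α`: (i) if the true CHSH value `S` satisfies `S ≤ 2√2 − 6√2·α` then
`P[S̄ ≥ θ] ≤ P[|S̄ − S| ≥ √2·α]`; (ii) if `S ≥ 2√2 − 4√2·α` then
`P[S̄ < θ] ≤ P[|S̄ − S| ≥ √2·α]`; and consequently, for a two-qubit density matrix ρ,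
`P[S̄ ≥ θ ∧ F(ρ) ≤ 1−3α] + P[S̄ < θ ∧ F(ρ) ≥ 1−α] ≤ 2·P[|S̄ − S(ρ)| ≥ √2·α]`. -/
theorem verification_error_decomposition {Ω : Type*} [MeasurableSpace Ω]
    (P : MeasureTheory.Measure Ω) [MeasureTheory.IsProbabilityMeasure P]
    (Sb : Ω → ℝ) (hSb : Measurable Sb)
    (α : ℝ) (hα : 0 < α) (hα' : α < 1 / 3) :
    (∀ S : ℝ,
      (S ≤ 2 * Real.sqrt 2 - 6 * Real.sqrt 2 * α →
        P {ω | Sb ω ≥ 2 * Real.sqrt 2 - 5 * Real.sqrt 2 * α} ≤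
          P {ω | |Sb ω - S| ≥ Real.sqrt 2 * α}) ∧
      (S ≥ 2 * Real.sqrt 2 - 4 * Real.sqrt 2 * α →
        P {ω | Sb ω < 2 * Real.sqrt 2 - 5 * Real.sqrt 2 * α} ≤
          P {ω | |Sb ω - S| ≥ Real.sqrt 2 * α})) ∧
    (∀ ρ : Matrix (Fin 2 × Fin 2) (Fin 2 × Fin 2) ℂ, ρ.PosSemidef → ρ.trace = 1 →
      P {ω | Sb ω ≥ 2 * Real.sqrt 2 - 5 * Real.sqrt 2 * α ∧ Fent ρ ≤ 1 - 3 * α} +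
        P {ω | Sb ω < 2 * Real.sqrt 2 - 5 * Real.sqrt 2 * α ∧ Fent ρ ≥ 1 - α} ≤
          2 * P {ω | |Sb ω - Smeas ρ| ≥ Real.sqrt 2 * α}) :=
  verification_error_decomposition_general P Sb α
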